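/- arXiv:1701.03025 — 3 statements merged into one kernel-verified Lean document; each statement's English description precedes it below -/
import Mathlib

section
/- Let A and B be finite dimensional algebras over an algebraically closed field k, and let Q be a finite dimensional A-B-bimodule. If the functor Q ⊗_B (-) from finite dimensional left B-modules to finite dimensional left A-modules sends every B-module to a projective A-module, then the functor Hom_A(Q, -) sends every short exact sequence of finite dimensional left A-modules to a split short exact sequence of left B-modules. -/
open scoped TensorProduct

/-- The tensor product `Q ⊗_B M` of an `A`-`B`-bimodule `Q` and a left `B`-module `M`,
realised as the quotient of `Q ⊗ₖ M` by the balancing relations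
`(q·b) ⊗ m - q ⊗ (b·m)`.  It is a left `A`-module via `Q`. -/
abbrev TensorOver (k : Type) [Field k] (B : Type) [Ring B]
    (A : Type) [Ring A] (Q : Type) [AddCommGroup Q] [Module k Q] [Module A Q]
    [Module Bᵐᵒᵖ Q] [SMulCommClass k A Q]
    (M : Type) [AddCommGroup M] [Module k M] [Module B M] : Type :=
  (Q ⊗[k] M) ⧸ (Submodule.span A {x : Q ⊗[k] M |
    ∃ (q : Q) (b : B) (m : M), x = (MulOpposite.op b • q) ⊗ₜ[k] m - q ⊗ₜ[k] (b • m)})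

/-- The right action of `b : B` on the `A`-`B`-bimodule `Q`, as an `A`-linear endomorphism. -/
def rAct {A B Q : Type} [Ring A] [Ring B] [AddCommGroup Q] [Module A Q]
    [Module Bᵐᵒᵖ Q] [SMulCommClass A Bᵐᵒᵖ Q] (b : B) : Q →ₗ[A] Q where
  toFun q := MulOpposite.op b • q
  map_add' _ _ := smul_add _ _ _
  map_smul' a q := (smul_comm a (MulOpposite.op b) q).symm

/-!
`Hom_A(Q, -)` is right adjoint to `Q ⊗_B -`. For `M = Hom_A(Q, Z)` the counit
`Q ⊗_B M → Z`, evaluation, lifts along the surjection `g : Y → Z` because `Q ⊗_B M` is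
projective. Precomposing the lift with the unit `M → Hom_A(Q, Q ⊗_B M)` gives, by the triangle
identity, a `B`-linear section of `Hom_A(Q, g)`. The rest is left exactness of `Hom_A(Q, -)`.
-/

lemma Function.Exact.linearMapComp_left {R M N P Q : Type} [Ring R]
    [AddCommGroup M] [AddCommGroup N] [AddCommGroup P] [AddCommGroup Q]
    [Module R M] [Module R N] [Module R P] [Module R Q]
    {f : M →ₗ[R] N} {g : N →ₗ[R] P} (hfg : Function.Exact f g) (hf : Function.Injective f) :
    Function.Exact (fun h : Q →ₗ[R] M => f ∘ₗ h) (fun h : Q →ₗ[R] N => g ∘ₗ h) := by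
  intro h
  refine ⟨fun hgh => ?_, ?_⟩
  · have hmem (q : Q) : h q ∈ LinearMap.range f := (hfg (h q)).1 (LinearMap.congr_fun hgh q)
    refine ⟨(LinearEquiv.ofInjective f hf).symm.toLinearMap ∘ₗ h.codRestrict _ hmem, ?_⟩
    ext q
    exact congrArg Subtype.val ((LinearEquiv.ofInjective f hf).apply_symm_apply ⟨h q, hmem q⟩)
  · rintro ⟨h', rfl⟩
    exact congrArg (· ∘ₗ h') hfg.linearMap_comp_eq_zero

namespace HomBimodule

section
variable {A B Q M N : Type} [Ring A] [Ring B] [AddCommGroup Q] [Module A Q] [Module Bᵐᵒᵖ Q]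
  [SMulCommClass A Bᵐᵒᵖ Q] [AddCommGroup M] [Module A M] [AddCommGroup N] [Module A N]

instance : SMul B (Q →ₗ[A] M) := ⟨fun b h => h ∘ₗ rAct b⟩

@[simp]
lemma smul_apply (b : B) (h : Q →ₗ[A] M) (q : Q) : (b • h) q = h (MulOpposite.op b • q) := rfl

instance : Module B (Q →ₗ[A] M) where
  one_smul h := by ext; simp
  mul_smul b₁ b₂ h := by ext; simp [mul_smul]
  smul_zero b := rfl
  smul_add b h₁ h₂ := rfl
  add_smul b₁ b₂ h := by ext; simp [add_smul]
  zero_smul h := by ext; simp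

def postcomp (φ : M →ₗ[A] N) : (Q →ₗ[A] M) →ₗ[B] (Q →ₗ[A] N) where
  toFun h := φ ∘ₗ h
  map_add' h₁ h₂ := LinearMap.comp_add h₁ h₂ φ
  map_smul' _ _ := rfl

@[simp]
lemma postcomp_apply (φ : M →ₗ[A] N) (h : Q →ₗ[A] M) : postcomp (B := B) φ h = φ ∘ₗ h := rfl

end

variable {k A B Q M : Type} [Field k] [Ring A] [Algebra k A] [Ring B] [Algebra k B]
  [AddCommGroup Q] [Module k Q] [Module A Q] [Module Bᵐᵒᵖ Q]
  [IsScalarTower k A Q] [IsScalarTower k Bᵐᵒᵖ Q] [SMulCommClass A Bᵐᵒᵖ Q]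
  [AddCommGroup M] [Module k M] [Module A M] [IsScalarTower k A M]

instance : IsScalarTower k B (Q →ₗ[A] M) where
  smul_assoc c b h := by
    ext q
    simp [MulOpposite.op_smul, smul_assoc, h.map_smul_of_tower]

instance [FiniteDimensional k Q] [FiniteDimensional k M] :
    FiniteDimensional k (Q →ₗ[A] M) :=
  .of_injective (LinearMap.restrictScalarsₗ k A Q M k) (LinearMap.restrictScalars_injective k)

end HomBimodule

namespace TensorOver

open HomBimodule

variable {k A B Q : Type} [Field k] [Ring A] [Algebra k A] [Ring B]
  [AddCommGroup Q] [Module k Q] [Module A Q] [Module Bᵐᵒᵖ Q]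
  [IsScalarTower k A Q]

section unit

variable {M : Type} [AddCommGroup M] [Module k M] [Module B M]

lemma mk_op_smul_tmul (q : Q) (b : B) (m : M) :
    (Submodule.Quotient.mk ((MulOpposite.op b • q) ⊗ₜ[k] m) : TensorOver k B A Q M) =
      Submodule.Quotient.mk (q ⊗ₜ[k] (b • m)) :=
  (Submodule.Quotient.eq _).2 (Submodule.subset_span ⟨q, b, m, rfl⟩)

variable [SMulCommClass A Bᵐᵒᵖ Q]

def unit : M →ₗ[B] (Q →ₗ[A] TensorOver k B A Q M) where
  toFun m :=
    { toFun q := Submodule.Quotient.mk (q ⊗ₜ[k] m)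
      map_add' q₁ q₂ := by rw [TensorProduct.add_tmul, Submodule.Quotient.mk_add]
      map_smul' a q := by rw [← TensorProduct.smul_tmul', Submodule.Quotient.mk_smul]; rfl }
  map_add' m₁ m₂ := by ext q; simp [TensorProduct.tmul_add]
  map_smul' b m := by ext q; exact (mk_op_smul_tmul q b m).symm

end unit

variable [SMulCommClass A Bᵐᵒᵖ Q] {Y Z : Type} [AddCommGroup Y] [Module A Y]
  [AddCommGroup Z] [Module k Z] [Module A Z] [IsScalarTower k A Z]

def evaluation : Q →ₗ[A] (Q →ₗ[A] Z) →ₗ[k] Z where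
  toFun q :=
    { toFun h := h q
      map_add' _ _ := rfl
      map_smul' _ _ := rfl }
  map_add' q₁ q₂ := by ext h; simp
  map_smul' a q := by ext h; simp

def counit : TensorOver k B A Q (Q →ₗ[A] Z) →ₗ[A] Z :=
  Submodule.liftQ _ (TensorProduct.AlgebraTensorModule.lift evaluation) <| by
    rw [Submodule.span_le]
    rintro _ ⟨q, b, h, rfl⟩
    simp [evaluation]

lemma counit_comp_unit (h : Q →ₗ[A] Z) : counit (k := k) (B := B) ∘ₗ unit h = h := rfl

theorem exists_postcomp_rightInverse [Module.Projective A (TensorOver k B A Q (Q →ₗ[A] Z))]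
    (g : Y →ₗ[A] Z) (hg : Function.Surjective g) :
    ∃ s : (Q →ₗ[A] Z) →ₗ[B] (Q →ₗ[A] Y), ∀ h, g ∘ₗ s h = h := by
  obtain ⟨L, hL⟩ := Module.projective_lifting_property g (counit (k := k) (B := B) (Q := Q)) hg
  refine ⟨postcomp L ∘ₗ unit (k := k) (A := A) (B := B) (M := Q →ₗ[A] Z), fun h => ?_⟩
  rw [LinearMap.comp_apply, postcomp_apply, ← LinearMap.comp_assoc, hL, counit_comp_unit]

end TensorOver

theorem stmt_0_general (k A B : Type) [Field k]
    [Ring A] [Algebra k A]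
    [Ring B] [Algebra k B]
    (Q : Type) [AddCommGroup Q] [Module k Q] [Module A Q] [Module Bᵐᵒᵖ Q]
    [IsScalarTower k A Q] [IsScalarTower k Bᵐᵒᵖ Q] [SMulCommClass A Bᵐᵒᵖ Q]
    [FiniteDimensional k Q]
    (hproj : ∀ (M : Type) [AddCommGroup M] [Module k M] [Module B M] [IsScalarTower k B M]
      [FiniteDimensional k M], Module.Projective A (TensorOver k B A Q M))
    (X Y Z : Type)
    [AddCommGroup X] [Module A X]
    [AddCommGroup Y] [Module k Y] [Module A Y] [IsScalarTower k A Y]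
    [AddCommGroup Z] [Module k Z] [Module A Z] [IsScalarTower k A Z] [FiniteDimensional k Z]
    (f : X →ₗ[A] Y) (g : Y →ₗ[A] Z)
    (hf : Function.Injective f) (hg : Function.Surjective g)
    (hfg : ∀ y : Y, g y = 0 ↔ y ∈ Set.range f) :
    Function.Injective (fun h : Q →ₗ[A] X => f ∘ₗ h) ∧
    Function.Surjective (fun h : Q →ₗ[A] Y => g ∘ₗ h) ∧
    (∀ h : Q →ₗ[A] Y, g ∘ₗ h = 0 ↔ ∃ h' : Q →ₗ[A] X, f ∘ₗ h' = h) ∧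
    ∃ s : (Q →ₗ[A] Z) →ₗ[k] (Q →ₗ[A] Y),
      (∀ h : Q →ₗ[A] Z, g ∘ₗ s h = h) ∧
      (∀ (b : B) (h : Q →ₗ[A] Z), s (h ∘ₗ rAct b) = s h ∘ₗ rAct b) := by
  have := hproj (Q →ₗ[A] Z)
  obtain ⟨s, hs⟩ := TensorOver.exists_postcomp_rightInverse (k := k) (B := B) (Q := Q) g hg
  exact ⟨hf.injective_linearMapComp_left, fun h => ⟨s h, hs h⟩,
    Function.Exact.linearMapComp_left hfg hf, s.restrictScalars k, hs, s.map_smul⟩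

/-- If tensoring with the `A`-`B`-bimodule `Q` sends every finite dimensional left `B`-module
to a projective left `A`-module, then `Hom_A(Q, -)` sends every short exact sequence
`0 → X → Y → Z → 0` of finite dimensional left `A`-modules to a split short exact sequence
of left `B`-modules (where `B` acts on `Hom_A(Q, -)` through the right action on `Q`):
the induced sequence is exact and the surjection admits a `B`-equivariant `k`-linear
section. -/
theorem stmt_0 (k A B : Type) [Field k] [IsAlgClosed k]
    [Ring A] [Algebra k A] [FiniteDimensional k A]
    [Ring B] [Algebra k B] [FiniteDimensional k B]
    (Q : Type) [AddCommGroup Q] [Module k Q] [Module A Q] [Module Bᵐᵒᵖ Q]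
    [IsScalarTower k A Q] [IsScalarTower k Bᵐᵒᵖ Q] [SMulCommClass A Bᵐᵒᵖ Q]
    [FiniteDimensional k Q]
    (hproj : ∀ (M : Type) [AddCommGroup M] [Module k M] [Module B M] [IsScalarTower k B M]
      [FiniteDimensional k M], Module.Projective A (TensorOver k B A Q M))
    (X Y Z : Type)
    [AddCommGroup X] [Module k X] [Module A X] [IsScalarTower k A X] [FiniteDimensional k X]
    [AddCommGroup Y] [Module k Y] [Module A Y] [IsScalarTower k A Y] [FiniteDimensional k Y]
    [AddCommGroup Z] [Module k Z] [Module A Z] [IsScalarTower k A Z] [FiniteDimensional k Z]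
    (f : X →ₗ[A] Y) (g : Y →ₗ[A] Z)
    (hf : Function.Injective f) (hg : Function.Surjective g)
    (hfg : ∀ y : Y, g y = 0 ↔ y ∈ Set.range f) :
    Function.Injective (fun h : Q →ₗ[A] X => f ∘ₗ h) ∧
    Function.Surjective (fun h : Q →ₗ[A] Y => g ∘ₗ h) ∧
    (∀ h : Q →ₗ[A] Y, g ∘ₗ h = 0 ↔ ∃ h' : Q →ₗ[A] X, f ∘ₗ h' = h) ∧
    ∃ s : (Q →ₗ[A] Z) →ₗ[k] (Q →ₗ[A] Y),
      (∀ h : Q →ₗ[A] Z, g ∘ₗ s h = h) ∧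
      (∀ (b : B) (h : Q →ₗ[A] Z), s (h ∘ₗ rAct b) = s h ∘ₗ rAct b) :=
  stmt_0_general k A B Q hproj X Y Z f g hf hg hfg
end

section
/- Let M be a k×k matrix with positive integer entries satisfying M² = 3M. Then, up to simultaneous permutation of rows and columns, M is one of: the 1×1 matrix (3); the 2×2 matrix with rows (2,2),(1,1); the 2×2 matrix with rows (2,1),(2,1); or the 3×3 matrix with all entries equal to 1. -/
lemma stmt_7_int_mul_eq_one {x y : ℤ} (hx : 0 < x) (hy : 0 < y) (h : x * y = 1) :
    x = 1 ∧ y = 1 := by constructor <;> nlinarith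

lemma stmt_7_fin1_case (M : Matrix (Fin 1) (Fin 1) ℤ) (hpos : ∀ i j, 0 < M i j)
    (hM : M * M = (3 : ℤ) • M) : M = !![(3:ℤ)] := by
  have h := congrFun (congrFun hM 0) 0
  simp [Matrix.mul_apply, Fin.sum_univ_one] at h
  have h0 := hpos 0 0
  have : M 0 0 = 3 := by omega
  ext i j
  fin_cases i <;> fin_cases j <;> simp [this]

lemma stmt_7_fin2_case (M : Matrix (Fin 2) (Fin 2) ℤ) (hpos : ∀ i j, 0 < M i j)
    (hM : M * M = (3 : ℤ) • M) :
    M = !![(2:ℤ),2;1,1] ∨ M = !![(2:ℤ),1;2,1] ∨ M = !![(1:ℤ),1;2,2] ∨ M = !![(1:ℤ),2;1,2] := by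
  have h00 := congrFun (congrFun hM 0) 0
  have h01 := congrFun (congrFun hM 0) 1
  have h11 := congrFun (congrFun hM 1) 1
  simp [Matrix.mul_apply, Fin.sum_univ_two] at h00 h01 h11
  have pa := hpos 0 0; have pb := hpos 0 1; have pc := hpos 1 0; have pd := hpos 1 1
  have had : M 0 0 + M 1 1 = 3 := by
    have h3 : M 0 1 * (M 0 0 + M 1 1) = M 0 1 * 3 := by ring_nf; ring_nf at h01; linarith
    exact mul_left_cancel₀ (by omega) h3
  have hbc : M 0 1 * M 1 0 = M 0 0 * M 1 1 := by nlinarith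
  have hble : M 0 1 ≤ M 0 1 * M 1 0 := le_mul_of_one_le_right (by omega) (by omega)
  have hcle : M 1 0 ≤ M 0 1 * M 1 0 := le_mul_of_one_le_left (by omega) (by omega)
  have ha2 : M 0 0 = 1 ∨ M 0 0 = 2 := by omega
  rcases ha2 with h | h
  · have hd2 : M 1 1 = 2 := by omega
    rw [h, hd2] at hbc
    have hb2 : M 0 1 = 1 ∨ M 0 1 = 2 := by omega
    rcases hb2 with hb1 | hb1
    · have hc1 : M 1 0 = 2 := by rw [hb1] at hbc; omega
      right; right; left
      ext i j; fin_cases i <;> fin_cases j <;> simp [h, hb1, hc1, hd2]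
    · have hc1 : M 1 0 = 1 := by rw [hb1] at hbc; omega
      right; right; right
      ext i j; fin_cases i <;> fin_cases j <;> simp [h, hb1, hc1, hd2]
  · have hd2 : M 1 1 = 1 := by omega
    rw [h, hd2] at hbc
    have hb2 : M 0 1 = 1 ∨ M 0 1 = 2 := by omega
    rcases hb2 with hb1 | hb1
    · have hc1 : M 1 0 = 2 := by rw [hb1] at hbc; omega
      right; left
      ext i j; fin_cases i <;> fin_cases j <;> simp [h, hb1, hc1, hd2]
    · have hc1 : M 1 0 = 1 := by rw [hb1] at hbc; omega
      left
      ext i j; fin_cases i <;> fin_cases j <;> simp [h, hb1, hc1, hd2]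

lemma stmt_7_fin3_case (M : Matrix (Fin 3) (Fin 3) ℤ) (hpos : ∀ i j, 0 < M i j)
    (hM : M * M = (3 : ℤ) • M) : M = !![(1:ℤ),1,1;1,1,1;1,1,1] := by
  have h00 := congrFun (congrFun hM 0) 0
  have h01 := congrFun (congrFun hM 0) 1
  have h02 := congrFun (congrFun hM 0) 2
  have h11 := congrFun (congrFun hM 1) 1
  have h22 := congrFun (congrFun hM 2) 2
  simp [Matrix.mul_apply, Fin.sum_univ_three] at h00 h01 h02 h11 h22
  have diag : ∀ p q r s t : ℤ, 0 < p → 0 < q → 0 < r → 0 < s → 0 < t →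
      p * p + q * r + s * t = 3 * p → q * r = 1 ∧ s * t = 1 := by
    intro p q r s t hp hq hr hs ht heq
    have hqr : 1 ≤ q * r := mul_pos hq hr
    have hst : 1 ≤ s * t := mul_pos hs ht
    have hfac : 0 ≤ (p - 1) * (p - 2) := by
      rcases le_or_gt p 1 with h | h
      · nlinarith
      · nlinarith
    constructor <;> nlinarith
  obtain ⟨hq1, hq2⟩ := diag (M 0 0) (M 0 1) (M 1 0) (M 0 2) (M 2 0)
    (hpos 0 0) (hpos 0 1) (hpos 1 0) (hpos 0 2) (hpos 2 0) h00
  obtain ⟨hq3, hq4⟩ := diag (M 1 1) (M 1 0) (M 0 1) (M 1 2) (M 2 1)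
    (hpos 1 1) (hpos 1 0) (hpos 0 1) (hpos 1 2) (hpos 2 1) (by linarith [h11])
  obtain ⟨b1, d1⟩ := stmt_7_int_mul_eq_one (hpos 0 1) (hpos 1 0) hq1
  obtain ⟨c1, g1⟩ := stmt_7_int_mul_eq_one (hpos 0 2) (hpos 2 0) hq2
  obtain ⟨f1, h1⟩ := stmt_7_int_mul_eq_one (hpos 1 2) (hpos 2 1) hq4
  simp only [b1, c1, d1, f1, g1, h1] at h01 h02
  have pa := hpos 0 0; have pe := hpos 1 1; have pi := hpos 2 2
  have ha : M 0 0 = 1 := by linarith [h01]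
  have he : M 1 1 = 1 := by linarith [h01]
  have hi : M 2 2 = 1 := by linarith [h02]
  ext i j; fin_cases i <;> fin_cases j <;>
    simp [ha, b1, c1, d1, he, f1, g1, h1, hi, Matrix.vecHead, Matrix.vecTail]

lemma stmt_7_card_le_three {ι : Type} [Fintype ι] [DecidableEq ι] [Nonempty ι]
    (M : Matrix ι ι ℤ) (hpos : ∀ i j, 0 < M i j) (hM : M * M = (3 : ℤ) • M) :
    Fintype.card ι ≤ 3 := by
  obtain ⟨i⟩ := ‹Nonempty ι›
  have h := congrFun (congrFun hM i) i
  simp only [Matrix.mul_apply, Matrix.smul_apply, smul_eq_mul] at h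
  rw [← Finset.add_sum_erase Finset.univ (fun j => M i j * M j i) (Finset.mem_univ i)] at h
  have hcard : ((Finset.univ.erase i).card : ℤ) ≤ ∑ j ∈ Finset.univ.erase i, M i j * M j i := by
    have := Finset.card_nsmul_le_sum (Finset.univ.erase i) (fun j => M i j * M j i) 1
      (fun x _ => mul_pos (hpos i x) (hpos x i))
    simpa using this
  have hce : (Finset.univ.erase i).card = Fintype.card ι - 1 :=
    Finset.card_erase_of_mem (Finset.mem_univ i)
  have hk1 : 1 ≤ Fintype.card ι := Fintype.card_pos
  have hd := hpos i i
  have hfac : 0 ≤ (M i i - 1) * (M i i - 2) := by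
    rcases le_or_gt (M i i) 1 with h' | h'
    · nlinarith
    · nlinarith
  have : ((Fintype.card ι : ℤ) - 1) ≤ 2 := by
    rw [hce] at hcard
    push_cast [hk1] at hcard
    nlinarith
  exact_mod_cast by linarith

/-- A `k×k` matrix with positive integer entries satisfying `M² = 3M` is, up to simultaneous
permutation of rows and columns, one of the four listed matrices. -/
theorem stmt_7 {ι : Type} [Fintype ι] [DecidableEq ι] [Nonempty ι]
    (M : Matrix ι ι ℤ) (hpos : ∀ i j, 0 < M i j) (hM : M * M = (3 : ℤ) • M) :
    (∃ e : ι ≃ Fin 1, M = (!![(3 : ℤ)]).submatrix e e) ∨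
    (∃ e : ι ≃ Fin 2, M = (!![(2 : ℤ), 2; 1, 1]).submatrix e e) ∨
    (∃ e : ι ≃ Fin 2, M = (!![(2 : ℤ), 1; 2, 1]).submatrix e e) ∨
    (∃ e : ι ≃ Fin 3, M = (!![(1 : ℤ), 1, 1; 1, 1, 1; 1, 1, 1]).submatrix e e) := by
  have hle := stmt_7_card_le_three M hpos hM
  have hpos' : 1 ≤ Fintype.card ι := Fintype.card_pos
  have hc : Fintype.card ι = 1 ∨ Fintype.card ι = 2 ∨ Fintype.card ι = 3 := by omega
  rcases hc with hc | hc | hc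
  · left
    let e : ι ≃ Fin 1 := Fintype.equivFinOfCardEq hc
    let N : Matrix (Fin 1) (Fin 1) ℤ := M.submatrix e.symm e.symm
    have hMN : N * N = (3 : ℤ) • N := by
      show M.submatrix e.symm e.symm * M.submatrix e.symm e.symm = _
      rw [Matrix.submatrix_mul_equiv M M e.symm e.symm e.symm, hM]; rfl
    have hN := stmt_7_fin1_case N (fun i j => hpos _ _) hMN
    refine ⟨e, ?_⟩
    rw [← hN]
    ext i j; simp [N, Matrix.submatrix_apply]
  · let e : ι ≃ Fin 2 := Fintype.equivFinOfCardEq hc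
    let N : Matrix (Fin 2) (Fin 2) ℤ := M.submatrix e.symm e.symm
    have hMN : N * N = (3 : ℤ) • N := by
      show M.submatrix e.symm e.symm * M.submatrix e.symm e.symm = _
      rw [Matrix.submatrix_mul_equiv M M e.symm e.symm e.symm, hM]; rfl
    have hback : M = N.submatrix e e := by
      ext i j; simp [N, Matrix.submatrix_apply]
    have hN := stmt_7_fin2_case N (fun i j => hpos _ _) hMN
    rcases hN with hN | hN | hN | hN
    · right; left; exact ⟨e, by rw [hback, hN]⟩
    · right; right; left; exact ⟨e, by rw [hback, hN]⟩
    · right; left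
      refine ⟨e.trans (Equiv.swap (0 : Fin 2) 1), ?_⟩
      have hswap : N = (!![(2:ℤ),2;1,1]).submatrix (Equiv.swap (0:Fin 2) 1) (Equiv.swap (0:Fin 2) 1) := by
        rw [hN]; decide
      rw [hback, hswap]; rfl
    · right; right; left
      refine ⟨e.trans (Equiv.swap (0 : Fin 2) 1), ?_⟩
      have hswap : N = (!![(2:ℤ),1;2,1]).submatrix (Equiv.swap (0:Fin 2) 1) (Equiv.swap (0:Fin 2) 1) := by
        rw [hN]; decide
      rw [hback, hswap]; rfl
  · right; right; right
    let e : ι ≃ Fin 3 := Fintype.equivFinOfCardEq hc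
    let N : Matrix (Fin 3) (Fin 3) ℤ := M.submatrix e.symm e.symm
    have hMN : N * N = (3 : ℤ) • N := by
      show M.submatrix e.symm e.symm * M.submatrix e.symm e.symm = _
      rw [Matrix.submatrix_mul_equiv M M e.symm e.symm e.symm, hM]; rfl
    have hN := stmt_7_fin3_case N (fun i j => hpos _ _) hMN
    refine ⟨e, ?_⟩
    rw [← hN]
    ext i j; simp [N, Matrix.submatrix_apply]
end

section
/- A k×k matrix M with positive integer entries satisfying M² = 3M has trace 3 and rank 1. -/
/-!
Over `ℚ` the matrix `M / 3` is idempotent, so `trace M = 3 · rank M`. In the entries `(i, i)`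
and `(i, j)` of `M² = 3M`, every summand other than those involving diagonal entries is at least
`1`; this bounds the diagonal so tightly that `trace M ≤ 3`. As the trace is positive, the rank
is `1`.
-/

open Finset

namespace Matrix

section Field

variable {n K : Type*} [Fintype n] [DecidableEq n] [Field K]

theorem trace_eq_rank_of_isIdempotentElem {A : Matrix n n K} (hA : IsIdempotentElem A) :
    A.trace = A.rank := by
  have hLin : IsIdempotentElem (toLin' A) := hA.map toLinAlgEquiv'
  rw [← trace_toLin'_eq, (LinearMap.IsIdempotentElem.isProj_range _ hLin).trace, rank,
    toLin'_apply']

theorem trace_eq_mul_rank_of_mul_self_eq_smul {A : Matrix n n K} {c : K} (hc : c ≠ 0)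
    (hA : A * A = c • A) : A.trace = c * A.rank := by
  have hidem : IsIdempotentElem (c⁻¹ • A) := by
    rw [IsIdempotentElem, smul_mul_smul_comm, hA, smul_smul, mul_assoc, inv_mul_cancel₀ hc,
      mul_one]
  have h := trace_eq_rank_of_isIdempotentElem hidem
  rw [trace_smul, smul_eq_mul,
    rank_smul_of_mem_nonZeroDivisors _ (mem_nonZeroDivisors_of_ne_zero (inv_ne_zero hc))] at h
  rw [← h, mul_inv_cancel_left₀ hc]

end Field

theorem trace_pos_of_diag_pos {n R : Type*} [Fintype n] [Nonempty n] [AddCommMonoid R]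
    [PartialOrder R] [IsOrderedCancelAddMonoid R] {A : Matrix n n R} (hA : ∀ i, 0 < A i i) :
    0 < A.trace :=
  sum_pos (fun i _ => hA i) univ_nonempty

section PositiveInteger

variable {ι : Type*} [Fintype ι] [DecidableEq ι] {M : Matrix ι ι ℤ}

theorem sum_mul_add_card_compl_le_mul_self_apply (hpos : ∀ i j, 0 < M i j)
    (s : Finset ι) (i j : ι) : ∑ l ∈ s, M i l * M l j + #sᶜ ≤ (M * M) i j := by
  have hcompl : (#sᶜ : ℤ) ≤ ∑ l ∈ sᶜ, M i l * M l j := by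
    simpa using card_nsmul_le_sum sᶜ (fun l => M i l * M l j) 1
      fun l _ => mul_pos (hpos i l) (hpos l j)
  rw [mul_apply, ← sum_add_sum_compl s]
  exact add_le_add_right hcompl _

variable (hpos : ∀ i j, 0 < M i j) (hM : M * M = (3 : ℤ) • M)
include hpos hM

theorem sq_diag_add_card_sub_one_le (i : ι) :
    M i i ^ 2 + (Fintype.card ι - 1 : ℤ) ≤ 3 * M i i := by
  have h := sum_mul_add_card_compl_le_mul_self_apply hpos {i} i i
  rw [hM, card_compl, card_singleton, Nat.cast_sub (Fintype.card_pos_iff.mpr ⟨i⟩)] at h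
  simpa [sq] using h

theorem diag_add_diag_mul_add_card_sub_two_le {i j : ι} (hij : i ≠ j) :
    (M i i + M j j) * M i j + (Fintype.card ι - 2 : ℤ) ≤ 3 * M i j := by
  have h := sum_mul_add_card_compl_le_mul_self_apply hpos {i, j} i j
  rw [hM, card_compl, card_pair hij, Nat.cast_sub (card_pair hij ▸ card_le_univ _)] at h
  simp only [sum_pair hij, Nat.cast_ofNat, smul_apply, Int.zsmul_eq_mul] at h
  linarith

theorem diag_eq_one_of_three_le_card (hk : 3 ≤ Fintype.card ι) (l : ι) : M l l = 1 := by
  obtain ⟨m, hml⟩ := Fintype.exists_ne_of_one_lt_card (by omega) l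
  have h := diag_add_diag_mul_add_card_sub_two_le hpos hM hml.symm
  have hk' : (3 : ℤ) ≤ Fintype.card ι := by exact_mod_cast hk
  nlinarith [hpos l l, hpos m m, hpos l m]

theorem trace_le_three [Nonempty ι] : M.trace ≤ 3 := by
  obtain hk | hk | hk : Fintype.card ι = 1 ∨ Fintype.card ι = 2 ∨ 3 ≤ Fintype.card ι := by
    have := Fintype.card_pos (α := ι)
    omega
  · obtain ⟨i⟩ := ‹Nonempty ι›
    have h := sq_diag_add_card_sub_one_le hpos hM i
    rw [trace, univ_eq_singleton_of_card_one i hk, sum_singleton, diag_apply]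
    push_cast [hk] at h
    nlinarith [hpos i i]
  · obtain ⟨i, j, hij, hu⟩ := (card_eq_two (s := (univ : Finset ι))).mp (by rwa [card_univ])
    have h := diag_add_diag_mul_add_card_sub_two_le hpos hM hij
    rw [trace, hu, sum_pair hij, diag_apply, diag_apply]
    push_cast [hk] at h
    nlinarith [hpos i j]
  · have hdiag := diag_eq_one_of_three_le_card hpos hM hk
    obtain ⟨i⟩ := ‹Nonempty ι›
    have h := sq_diag_add_card_sub_one_le hpos hM i
    simp only [trace, diag_apply, hdiag, sum_const, card_univ, nsmul_one] at h ⊢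
    linarith

end PositiveInteger

end Matrix

/-- A `k×k` matrix with positive integer entries satisfying `M² = 3M` has trace `3` and
rank `1` (computed over `ℚ`). -/
theorem stmt_8 {ι : Type} [Fintype ι] [DecidableEq ι] [Nonempty ι]
    (M : Matrix ι ι ℤ) (hpos : ∀ i j, 0 < M i j) (hM : M * M = (3 : ℤ) • M) :
    Matrix.trace M = 3 ∧ (M.map (Int.cast : ℤ → ℚ)).rank = 1 := by
  set A := M.map (Int.cast : ℤ → ℚ)
  have hA : A * A = (3 : ℚ) • A := by
    refine (Matrix.map_mul (f := Int.castRingHom ℚ)).symm.trans ?_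
    rw [hM]
    ext i j
    simp only [A, Matrix.map_apply, Matrix.smul_apply, smul_eq_mul, eq_intCast, Int.cast_mul,
      Int.cast_ofNat]
  have htrace : (M.trace : ℚ) = 3 * A.rank := by
    rw [← Matrix.trace_eq_mul_rank_of_mul_self_eq_smul three_ne_zero hA]
    simp [A, Matrix.trace]
  have hrank : M.trace = 3 * A.rank := by exact_mod_cast htrace
  have := Matrix.trace_pos_of_diag_pos fun i => hpos i i
  have := Matrix.trace_le_three hpos hM
  omega
end
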